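/- Lazy OGD with Minkowski regularization regret bound: under the assumptions below, the iterates y_{t+1} = y_t − η∇f̂_t(y_t) (with exact gradients, y_1 ∈ K, f̂_t(x) = f_t(x) + 3GD(γ(x)−1)) and x_t = y_t/γ(y_t), with η = r/(√T·G), satisfy Σ_{t=1}^T f_t(x_t) − min_{x∈K} Σ_{t=1}^T f_t(x) ≤ O(D²G√T / r). -/

import Mathlib

open scoped RealInnerProductSpace

noncomputable def mink {d : ℕ} (K : Set (EuclideanSpace ℝ (Fin d)))
    (x : EuclideanSpace ℝ (Fin d)) : ℝ :=
  sInf {c : ℝ | 1 ≤ c ∧ c⁻¹ • x ∈ K}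

variable {d : ℕ} {K : Set (EuclideanSpace ℝ (Fin d))} {r : ℝ}

lemma mink_bdd (K : Set (EuclideanSpace ℝ (Fin d))) (u : EuclideanSpace ℝ (Fin d)) :
    BddBelow {c : ℝ | 1 ≤ c ∧ c⁻¹ • u ∈ K} := ⟨1, fun _ hc => hc.1⟩

lemma mink_ne (hr : 0 < r) (hball : Metric.closedBall (0 : EuclideanSpace ℝ (Fin d)) r ⊆ K)
    (u : EuclideanSpace ℝ (Fin d)) : {c : ℝ | 1 ≤ c ∧ c⁻¹ • u ∈ K}.Nonempty := by
  refine ⟨max 1 (‖u‖ / r), le_max_left _ _, hball ?_⟩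
  rw [Metric.mem_closedBall, dist_zero_right, norm_smul, norm_inv, Real.norm_eq_abs]
  have h1 : (0:ℝ) < max 1 (‖u‖ / r) := lt_of_lt_of_le one_pos (le_max_left _ _)
  rw [abs_of_pos h1, inv_mul_le_iff₀ h1]
  have h2 : ‖u‖ / r ≤ max 1 (‖u‖ / r) := le_max_right _ _
  rw [div_le_iff₀ hr] at h2
  nlinarith

lemma mink_le (hr : 0 < r) (hball : Metric.closedBall (0 : EuclideanSpace ℝ (Fin d)) r ⊆ K)
    {u : EuclideanSpace ℝ (Fin d)} {c : ℝ} (hc : 1 ≤ c) (hcu : c⁻¹ • u ∈ K) :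
    mink K u ≤ c := csInf_le (mink_bdd K u) ⟨hc, hcu⟩

lemma one_le_mink (hr : 0 < r) (hball : Metric.closedBall (0 : EuclideanSpace ℝ (Fin d)) r ⊆ K)
    (u : EuclideanSpace ℝ (Fin d)) : 1 ≤ mink K u :=
  le_csInf (mink_ne hr hball u) (fun _ hc => hc.1)

lemma mink_mem (hr : 0 < r) (hball : Metric.closedBall (0 : EuclideanSpace ℝ (Fin d)) r ⊆ K)
    (hK : IsClosed K) (u : EuclideanSpace ℝ (Fin d)) : (mink K u)⁻¹ • u ∈ K := by
  have hS : IsClosed {c : ℝ | 1 ≤ c ∧ c⁻¹ • u ∈ K} := by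
    have heq : {c : ℝ | 1 ≤ c ∧ c⁻¹ • u ∈ K}
        = Set.Ici (1:ℝ) ∩ (fun c : ℝ => c⁻¹ • u) ⁻¹' K := rfl
    rw [heq]
    refine ContinuousOn.preimage_isClosed_of_isClosed ?_ isClosed_Ici hK
    exact (continuousOn_id.inv₀ (fun x hx => by
      have : (1:ℝ) ≤ x := hx
      positivity)).smul continuousOn_const
  exact (hS.csInf_mem (mink_ne hr hball u) (mink_bdd K u)).2

lemma mink_of_mem (hr : 0 < r) (hball : Metric.closedBall (0 : EuclideanSpace ℝ (Fin d)) r ⊆ K)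
    {u : EuclideanSpace ℝ (Fin d)} (hu : u ∈ K) : mink K u = 1 :=
  le_antisymm (mink_le hr hball le_rfl (by simpa using hu)) (one_le_mink hr hball u)

lemma mink_lip (hr : 0 < r) (hball : Metric.closedBall (0 : EuclideanSpace ℝ (Fin d)) r ⊆ K)
    (hK : IsClosed K) (hconv : Convex ℝ K) (u v : EuclideanSpace ℝ (Fin d)) :
    mink K u ≤ mink K v + ‖u - v‖ / r := by
  by_cases h : u = v
  · simp [h]
  set c := mink K v with hc
  have hc1 : 1 ≤ c := one_le_mink hr hball v
  have hcv : c⁻¹ • v ∈ K := mink_mem hr hball hK v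
  set t := ‖u - v‖ / r with ht
  have ht0 : 0 < t := div_pos (norm_pos_iff.2 (sub_ne_zero.2 h)) hr
  have hc0 : (0:ℝ) < c := lt_of_lt_of_le one_pos hc1
  have hct : (0:ℝ) < c + t := by linarith
  refine mink_le hr hball (by linarith) ?_
  have key : (c + t)⁻¹ • u
      = (c/(c+t)) • (c⁻¹ • v) + (t/(c+t)) • (t⁻¹ • (u - v)) := by
    rw [smul_smul, smul_smul]
    have e1 : c/(c+t) * c⁻¹ = (c+t)⁻¹ := by field_simp
    have e2 : t/(c+t) * t⁻¹ = (c+t)⁻¹ := by field_simp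
    rw [e1, e2, ← smul_add]
    congr 1
    abel
  rw [key]
  refine hconv hcv (hball ?_) (by positivity) (by positivity) (by field_simp)
  rw [Metric.mem_closedBall, dist_zero_right, norm_smul, norm_inv, Real.norm_eq_abs,
    abs_of_pos ht0, ht]
  rw [div_eq_mul_inv, mul_inv, inv_inv]
  have : ‖u - v‖ ≠ 0 := norm_ne_zero_iff.2 (sub_ne_zero.2 h)
  field_simp
  exact le_rfl


set_option maxHeartbeats 2000000 in
/-- Regret bound for lazy OGD with the Minkowski regularization
`f̂_t(x) = f_t(x) + 3GD(γ(x) - 1)`, exact (sub)gradients, step size `η = r/(√T G)`. -/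
theorem lazy_ogd_minkowski_regret {d : ℕ}
    (K : Set (EuclideanSpace ℝ (Fin d))) (r D G : ℝ) (T : ℕ)
    (hT : 1 ≤ T) (hG : 1 ≤ G) (hD : 1 ≤ D) (hr : 0 < r)
    (hcomp : IsCompact K) (hconv : Convex ℝ K)
    (hball : Metric.closedBall (0 : EuclideanSpace ℝ (Fin d)) r ⊆ K)
    (hdiam : Metric.diam K ≤ D)
    (f : ℕ → EuclideanSpace ℝ (Fin d) → ℝ)
    (hfconv : ∀ t, ConvexOn ℝ Set.univ (f t))
    (hfLip : ∀ t, ∀ x y : EuclideanSpace ℝ (Fin d), |f t x - f t y| ≤ G * ‖x - y‖)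
    (hfnonneg : ∀ t x, 0 ≤ f t x)
    (g : ℕ → EuclideanSpace ℝ (Fin d) → EuclideanSpace ℝ (Fin d))
    (hsubgrad : ∀ t, ∀ y z : EuclideanSpace ℝ (Fin d),
      f t y + 3 * G * D * (mink K y - 1) + ⟪g t y, z - y⟫ ≤
        f t z + 3 * G * D * (mink K z - 1))
    (y : ℕ → EuclideanSpace ℝ (Fin d)) (hy1 : y 1 ∈ K)
    (hupdate : ∀ t, y (t + 1) = y t - (r / (Real.sqrt T * G)) • g t (y t))
    (x : ℕ → EuclideanSpace ℝ (Fin d))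
    (hx : ∀ t, x t = (mink K (y t))⁻¹ • y t) :
    ∀ z ∈ K,
      (∑ t ∈ Finset.Icc 1 T, f t (x t)) - (∑ t ∈ Finset.Icc 1 T, f t z) ≤
        9 * D ^ 2 * G * Real.sqrt T / r := by
  intro z hz
  have hG0 : (0:ℝ) < G := by linarith
  have hD0 : (0:ℝ) < D := by linarith
  have hs0 : (0:ℝ) < Real.sqrt T := Real.sqrt_pos.2 (by exact_mod_cast Nat.lt_of_lt_of_le Nat.zero_lt_one hT)
  rcases Nat.eq_zero_or_pos d with hd | hd
  · subst hd
    have hxz : ∀ u v : EuclideanSpace ℝ (Fin 0), u = v := fun u v => PiLp.ext fun i => Fin.elim0 i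
    have heq : ∀ t, f t (x t) = f t z := fun t => by rw [hxz (x t) z]
    rw [Finset.sum_congr rfl (fun t _ => heq t), sub_self]
    apply div_nonneg _ hr.le
    nlinarith [mul_pos (mul_pos (mul_pos hD0 hD0) hG0) hs0]
  -- d ≥ 1 : get 2r ≤ D
  have hK : IsClosed K := hcomp.isClosed
  set e : EuclideanSpace ℝ (Fin d) := EuclideanSpace.single ⟨0, hd⟩ (r:ℝ) with he
  have hne : ‖e‖ = r := by rw [he, EuclideanSpace.norm_single, Real.norm_eq_abs, abs_of_pos hr]
  have heK : e ∈ K := hball (by rw [Metric.mem_closedBall, dist_zero_right, hne])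
  have hneK : -e ∈ K := hball (by rw [Metric.mem_closedBall, dist_zero_right, norm_neg, hne])
  have h2r : 2 * r ≤ D := by
    have : dist e (-e) = 2 * r := by
      rw [dist_eq_norm, sub_neg_eq_add, ← two_smul ℝ e, norm_smul, hne]
      simp
    calc 2 * r = dist e (-e) := this.symm
      _ ≤ Metric.diam K := Metric.dist_le_diam_of_mem hcomp.isBounded heK hneK
      _ ≤ D := hdiam
  have hrD : r ≤ D := by linarith
  -- setup
  set s : ℝ := Real.sqrt T with hs
  have hs1 : 1 ≤ s := by
    rw [hs, show (1:ℝ) = Real.sqrt 1 by simp]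
    exact Real.sqrt_le_sqrt (by exact_mod_cast hT)
  have hs2 : s ^ 2 = (T:ℝ) := Real.sq_sqrt (by positivity)
  set η : ℝ := r / (s * G) with hη
  have hη0 : 0 < η := div_pos hr (by positivity)
  set L : ℝ := G + 3 * G * D / r with hL
  have hL0 : 0 < L := by positivity
  -- gradient bound
  have hgb : ∀ t (u : EuclideanSpace ℝ (Fin d)), ‖g t u‖ ≤ L := by
    intro t u
    set w := g t u with hw
    have h1 := hsubgrad t u (u + w)
    rw [add_sub_cancel_left] at h1
    rw [real_inner_self_eq_norm_sq] at h1
    have h2 : f t (u + w) - f t u ≤ G * ‖w‖ := by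
      have := hfLip t (u + w) u
      rw [add_sub_cancel_left] at this
      exact (abs_le.1 this).2
    have h3 : mink K (u + w) ≤ mink K u + ‖w‖ / r := by
      have := mink_lip hr hball hK hconv (u + w) u
      rwa [add_sub_cancel_left] at this
    have h4 : ‖w‖ ^ 2 ≤ L * ‖w‖ := by
      have hGD : 0 < 3 * G * D := by positivity
      have : 3 * G * D * (mink K (u+w) - mink K u) ≤ 3 * G * D / r * ‖w‖ := by
        have := mul_le_mul_of_nonneg_left (by linarith : mink K (u+w) - mink K u ≤ ‖w‖ / r) hGD.le
        calc 3 * G * D * (mink K (u+w) - mink K u) ≤ 3 * G * D * (‖w‖ / r) := this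
          _ = 3 * G * D / r * ‖w‖ := by ring
      rw [hL]; nlinarith
    rcases eq_or_lt_of_le (norm_nonneg w) with h0 | h0
    · rw [← h0]; exact hL0.le
    · nlinarith
  -- per-step
  have hzero : (0 : EuclideanSpace ℝ (Fin d)) ∈ K := hball (by simp [hr.le])
  set a : ℕ → ℝ := fun t => ‖y t - z‖ ^ 2 with ha
  have step : ∀ t, f t (x t) - f t z ≤ (a t - a (t+1)) / (2*η) + η/2 * L^2 := by
    intro t
    set c := mink K (y t) with hc
    have hc1 : 1 ≤ c := one_le_mink hr hball (y t)
    have hc0 : (0:ℝ) < c := lt_of_lt_of_le one_pos hc1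
    have hxK : x t ∈ K := by rw [hx t]; exact mink_mem hr hball hK (y t)
    have hxD : ‖x t‖ ≤ D := by
      calc ‖x t‖ = dist (x t) 0 := by rw [dist_zero_right]
        _ ≤ Metric.diam K := Metric.dist_le_diam_of_mem hcomp.isBounded hxK hzero
        _ ≤ D := hdiam
    have hfx : f t (x t) ≤ f t (y t) + 3 * G * D * (c - 1) := by
      have hdiff : ‖x t - y t‖ = (c - 1) * ‖x t‖ := by
        have e1 : x t - y t = (c⁻¹ - 1) • y t := by
          rw [hx t, sub_smul, one_smul]
        have e2 : ‖x t‖ = c⁻¹ * ‖y t‖ := by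
          rw [hx t, norm_smul, norm_inv, Real.norm_eq_abs, abs_of_pos hc0]
        have hinv : c⁻¹ ≤ 1 := by
          rw [inv_le_one_iff₀]; right; exact hc1
        have e3 : (c - 1) * c⁻¹ = 1 - c⁻¹ := by field_simp
        rw [e1, norm_smul, Real.norm_eq_abs, abs_of_nonpos (by linarith), e2,
          ← mul_assoc, e3]
        ring
      have h5 : f t (x t) - f t (y t) ≤ G * ‖x t - y t‖ := (abs_le.1 (hfLip t (x t) (y t))).2
      rw [hdiff] at h5
      have hb1 : G * (c-1) * ‖x t‖ ≤ G * (c-1) * D :=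
        mul_le_mul_of_nonneg_left hxD (mul_nonneg hG0.le (sub_nonneg.2 hc1))
      nlinarith [mul_nonneg (mul_nonneg hG0.le hD0.le) (sub_nonneg.2 hc1)]
    have hsub := hsubgrad t (y t) z
    rw [mink_of_mem hr hball hz] at hsub
    simp only [sub_self, mul_zero, add_zero] at hsub
    set w := g t (y t) with hwdef
    have hswap : ⟪w, z - y t⟫ = - ⟪w, y t - z⟫ := by
      rw [← inner_neg_right]; congr 1; abel
    rw [hswap] at hsub
    have hI : f t (x t) - f t z ≤ ⟪w, y t - z⟫ := by
      rw [← hc] at hsub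
      linarith
    have hupd : y (t+1) - z = (y t - z) - η • w := by
      rw [hupdate t]; abel
    have hiden : ‖y (t+1) - z‖^2
        = ‖y t - z‖^2 - 2 * (η * ⟪w, y t - z⟫) + η^2 * ‖w‖^2 := by
      rw [hupd, norm_sub_sq_real, real_inner_smul_right, norm_smul, Real.norm_eq_abs,
        abs_of_pos hη0, mul_pow, real_inner_comm]
    have hw2 : ‖w‖^2 ≤ L^2 := by
      have := hgb t (y t)
      nlinarith [norm_nonneg w]
    have haa : ∀ n, a n = ‖y n - z‖^2 := fun n => rfl
    have h6 : (2*η) ≠ 0 := by positivity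
    have hIval : ⟪w, y t - z⟫ = (a t - a (t+1)) / (2*η) + η/2 * ‖w‖^2 := by
      have h8 : (a t - a (t+1)) / (2*η) + η/2 * ‖w‖^2
          = (a t - a (t+1) + η^2*‖w‖^2)/(2*η) := by
        field_simp
      rw [h8, eq_comm, div_eq_iff h6, haa, haa]
      linarith [hiden]
    calc f t (x t) - f t z ≤ ⟪w, y t - z⟫ := hI
      _ = (a t - a (t+1)) / (2*η) + η/2 * ‖w‖^2 := hIval
      _ ≤ (a t - a (t+1)) / (2*η) + η/2 * L^2 := by
          have := mul_le_mul_of_nonneg_left hw2 (by positivity : (0:ℝ) ≤ η/2)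
          linarith
  -- sum up
  have htel : ∑ t ∈ Finset.Icc 1 T, (a t - a (t+1)) = a 1 - a (T+1) := by
    rw [← Finset.Ico_add_one_right_eq_Icc, Finset.sum_Ico_eq_sum_range]
    simp only [Nat.add_sub_cancel]
    have h := Finset.sum_range_sub' (fun i => a (1 + i)) T
    simp only [Nat.add_zero, ← Nat.add_assoc, Nat.add_comm 1 T] at h
    exact h
  have ha1 : a 1 ≤ D^2 := by
    have h1 : ‖y 1 - z‖ ≤ D := by
      calc ‖y 1 - z‖ = dist (y 1) z := (dist_eq_norm _ _).symm
        _ ≤ Metric.diam K := Metric.dist_le_diam_of_mem hcomp.isBounded hy1 hz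
        _ ≤ D := hdiam
    rw [ha]
    exact pow_le_pow_left₀ (norm_nonneg _) h1 2
  have hsum : (∑ t ∈ Finset.Icc 1 T, f t (x t)) - (∑ t ∈ Finset.Icc 1 T, f t z)
      ≤ D^2 / (2*η) + (T:ℝ) * (η/2 * L^2) := by
    rw [← Finset.sum_sub_distrib]
    calc ∑ t ∈ Finset.Icc 1 T, (f t (x t) - f t z)
        ≤ ∑ t ∈ Finset.Icc 1 T, ((a t - a (t+1)) / (2*η) + η/2 * L^2) :=
          Finset.sum_le_sum (fun t _ => step t)
      _ = (a 1 - a (T+1)) / (2*η) + (T:ℝ) * (η/2 * L^2) := by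
          rw [Finset.sum_add_distrib, ← Finset.sum_div, htel, Finset.sum_const,
            Nat.card_Icc]
          simp
      _ ≤ D^2 / (2*η) + (T:ℝ) * (η/2 * L^2) := by
          have h0 : (0:ℝ) ≤ a (T+1) := by rw [ha]; positivity
          have : (a 1 - a (T+1)) / (2*η) ≤ D^2 / (2*η) := by
            apply div_le_div_of_nonneg_right _ (by positivity)
            linarith
          linarith
  -- final arithmetic
  have hfin : D^2 / (2*η) + (T:ℝ) * (η/2 * L^2) ≤ 9 * D ^ 2 * G * s / r := by
    have heq2 : D^2 / (2*η) + (T:ℝ) * (η/2 * L^2) = s * G * (D^2 + (r + 3*D)^2) / (2*r) := by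
      rw [← hs2, hη, hL]
      field_simp
    rw [heq2, div_le_div_iff₀ (by positivity) hr]
    have h16 : D^2 + (r + 3*D)^2 ≤ 18 * D^2 := by nlinarith
    have h17 : (0:ℝ) ≤ s * G * r := mul_nonneg (mul_nonneg hs0.le hG0.le) hr.le
    nlinarith [mul_le_mul_of_nonneg_left h16 h17]
  linarith
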